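/- Let Π = (R, CR) be a finite ground CR-program over a set of atoms At, and let τ(Π) be its weak-constraint translation using fresh atoms appl_1, …, appl_N. If A is an answer set of the CR-program Π, then there exists an answer set S of the weak-constraint program τ(Π) such that A is exactly the set of literals in S not formed from any of the fresh atoms appl_1, …, appl_N. -/

import Mathlib

/-- A literal is an atom or its classical negation. -/
inductive Lit (α : Type) where
  | pos : α → Lit α
  | neg : α → Lit α
deriving DecidableEq

/-- The atom a literal is formed from. -/
def Lit.atom {α : Type} : Lit α → α
  | .pos a => a
  | .neg a => a

/-- A set of literals is consistent if it contains no complementary pair. -/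
def Consistent {α : Type} (S : Set (Lit α)) : Prop :=
  ∀ a : α, ¬ (Lit.pos a ∈ S ∧ Lit.neg a ∈ S)

/-- A ground rule  l₀ ∨ … ∨ l_m ← l_{m+1}, …, l_k, not l_{k+1}, …, not l_n. -/
structure Rule (α : Type) where
  head : List (Lit α)
  pbody : List (Lit α)
  nbody : List (Lit α)
deriving DecidableEq

/-- `S` satisfies a rule. -/
def Satisfies {α : Type} (S : Set (Lit α)) (r : Rule α) : Prop :=
  ((∀ l ∈ r.pbody, l ∈ S) ∧ (∀ l ∈ r.nbody, l ∉ S)) → ∃ l ∈ r.head, l ∈ S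

/-- The reduct of a ground program relative to `S`. -/
def reduct {α : Type} (P : Set (Rule α)) (S : Set (Lit α)) : Set (Rule α) :=
  {r' | ∃ r ∈ P, (∀ l ∈ r.nbody, l ∉ S) ∧ r' = ⟨r.head, r.pbody, []⟩}

/-- `S` satisfies all rules of `P`. -/
def SatAll {α : Type} (P : Set (Rule α)) (S : Set (Lit α)) : Prop :=
  ∀ r ∈ P, Satisfies S r

/-- `S` is an answer set of the ground program `P`: `S` is consistent and minimal
among consistent sets of literals satisfying all rules of the reduct `P^S`. -/
def IsAnswerSet {α : Type} (P : Set (Rule α)) (S : Set (Lit α)) : Prop :=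
  Consistent S ∧ SatAll (reduct P S) S ∧
    ∀ T, Consistent T → SatAll (reduct P S) T → T ⊆ S → T = S

/-- A cr-rule  l₀ ←⁺ l_1, …, l_k, not l_{k+1}, …, not l_n, with a single literal head. -/
structure CrRule (α : Type) where
  head : Lit α
  pbody : List (Lit α)
  nbody : List (Lit α)
deriving DecidableEq

/-- α(r): the regular rule obtained from a cr-rule by replacing ←⁺ with ←. -/
def CrRule.alpha {α : Type} (r : CrRule α) : Rule α :=
  ⟨[r.head], r.pbody, r.nbody⟩

/-- `X` is an abductive support of the CR-program `(R, CRs)`. -/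
def IsAbductiveSupport {α : Type} [DecidableEq α]
    (R : Finset (Rule α)) (CRs X : Finset (CrRule α)) : Prop :=
  X ⊆ CRs ∧ (∃ S, IsAnswerSet ((R : Set (Rule α)) ∪ ↑(X.image CrRule.alpha)) S) ∧
    ∀ Y ⊆ CRs, (∃ S, IsAnswerSet ((R : Set (Rule α)) ∪ ↑(Y.image CrRule.alpha)) S) → X.card ≤ Y.card

/-- `A` is an answer set of the CR-program `(R, CRs)`. -/
def IsCrAnswerSet {α : Type} [DecidableEq α]
    (R : Finset (Rule α)) (CRs : Finset (CrRule α)) (A : Set (Lit α)) : Prop :=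
  ∃ X, IsAbductiveSupport R CRs X ∧ IsAnswerSet ((R : Set (Rule α)) ∪ ↑(X.image CrRule.alpha)) A

/-- A weak constraint  :~ l_1, …, l_k, not l_{k+1}, …, not l_n. -/
structure WeakConstraint (α : Type) where
  pbody : List (Lit α)
  nbody : List (Lit α)
deriving DecidableEq

/-- `S` violates a weak constraint. -/
def ViolatesWC {α : Type} (S : Set (Lit α)) (w : WeakConstraint α) : Prop :=
  (∀ l ∈ w.pbody, l ∈ S) ∧ (∀ l ∈ w.nbody, l ∉ S)

/-- The number of weak constraints of `W` violated by `S`. -/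
noncomputable def violatedCount {α : Type} (W : Finset (WeakConstraint α))
    (S : Set (Lit α)) : ℕ :=
  {w : WeakConstraint α | w ∈ W ∧ ViolatesWC S w}.ncard

/-- `S` is an answer set of the weak-constraint program `(P, W)`. -/
def IsWcAnswerSet {α : Type} (P : Set (Rule α)) (W : Finset (WeakConstraint α))
    (S : Set (Lit α)) : Prop :=
  IsAnswerSet P S ∧ ∀ T, IsAnswerSet P T → violatedCount W S ≤ violatedCount W T

section Translation

variable {α : Type} [DecidableEq α] {N : ℕ}

/-- Atom `a` occurs in the rule `r`. -/
def OccursInRule (a : α) (r : Rule α) : Prop :=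
  ∃ l ∈ r.head ++ r.pbody ++ r.nbody, l.atom = a

/-- Atom `a` occurs in the cr-rule `r`. -/
def OccursInCrRule (a : α) (r : CrRule α) : Prop :=
  ∃ l ∈ r.head :: (r.pbody ++ r.nbody), l.atom = a

/-- The atoms `appl i` are distinct and fresh: they do not occur in the
CR-program `(R, cr 1, …, cr N)`. -/
def FreshAppl (R : Finset (Rule α)) (cr : Fin N → CrRule α) (appl : Fin N → α) : Prop :=
  Function.Injective appl ∧
    ∀ i : Fin N, (∀ r ∈ R, ¬ OccursInRule (appl i) r) ∧
      (∀ j : Fin N, ¬ OccursInCrRule (appl i) (cr j))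

/-- The rule  appl_i ∨ ¬appl_i ← B_i. -/
def choiceRule (cr : Fin N → CrRule α) (appl : Fin N → α) (i : Fin N) : Rule α :=
  ⟨[Lit.pos (appl i), Lit.neg (appl i)], (cr i).pbody, (cr i).nbody⟩

/-- The rule  h_i ← appl_i, B_i. -/
def applRule (cr : Fin N → CrRule α) (appl : Fin N → α) (i : Fin N) : Rule α :=
  ⟨[(cr i).head], Lit.pos (appl i) :: (cr i).pbody, (cr i).nbody⟩

/-- The hard part of the translation τ(Π). -/
def tauHard (R : Finset (Rule α)) (cr : Fin N → CrRule α) (appl : Fin N → α) :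
    Set (Rule α) :=
  ↑R ∪ Set.range (choiceRule cr appl) ∪ Set.range (applRule cr appl)

/-- The i-th weak constraint  :~ appl_i, B_i  of the translation τ(Π). -/
def wcOf (cr : Fin N → CrRule α) (appl : Fin N → α) (i : Fin N) : WeakConstraint α :=
  ⟨Lit.pos (appl i) :: (cr i).pbody, (cr i).nbody⟩

/-- The set of weak constraints of the translation τ(Π). -/
def tauWeak (cr : Fin N → CrRule α) (appl : Fin N → α) : Finset (WeakConstraint α) :=
  Finset.image (wcOf cr appl) Finset.univ

/-- The literals of `S` not formed from any of the fresh atoms `appl i`. -/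
def restrictAway (appl : Fin N → α) (S : Set (Lit α)) : Set (Lit α) :=
  {l ∈ S | ∀ i : Fin N, l.atom ≠ appl i}

end Translation

/-! Extend an answer set `A` of `R ∪ α(X)`, `X` an abductive support, by making `appl i` true
for the cr-rules `cr i ∈ X` and false for the others, among those whose body holds in `A`: this is
an answer set of τ(Π) violating at most `|X|` weak constraints. Conversely, erasing the fresh atoms
from any answer set `T` of τ(Π) leaves an answer set of `R ∪ α(Y)`, where `Y` is the set of
cr-rules whose weak constraint `T` violates, so `|X| ≤ |Y|` by minimality of `X`. Both directions
work because the fresh atoms do not occur in Π, so the rules of Π cannot distinguish a set of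
literals from its restriction to the original atoms. -/

section CrTranslation

variable {α : Type} {N : ℕ}

theorem Consistent.mono {S T : Set (Lit α)} (h : S ⊆ T) (hT : Consistent T) : Consistent S :=
  fun a ha => hT a ⟨h ha.1, h ha.2⟩

theorem satAll_reduct_iff {P : Set (Rule α)} {S T : Set (Lit α)} :
    SatAll (reduct P S) T ↔ ∀ r ∈ P, (∀ l ∈ r.nbody, l ∉ S) →
      (∀ l ∈ r.pbody, l ∈ T) → ∃ l ∈ r.head, l ∈ T := by
  constructor
  · intro h r hr hn hp
    exact h ⟨r.head, r.pbody, []⟩ ⟨r, hr, hn, rfl⟩ ⟨hp, by simp⟩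
  · rintro h _ ⟨r, hr, hn, rfl⟩ ⟨hp, -⟩
    exact h r hr hn hp

def CrRule.BodyHolds (S : Set (Lit α)) (c : CrRule α) : Prop :=
  (∀ l ∈ c.pbody, l ∈ S) ∧ ∀ l ∈ c.nbody, l ∉ S

theorem satAll_reduct_union_alpha_iff [DecidableEq α] {P : Set (Rule α)}
    {X : Finset (CrRule α)} {S T : Set (Lit α)} :
    SatAll (reduct (P ∪ ↑(X.image CrRule.alpha)) S) T ↔ SatAll (reduct P S) T ∧
      ∀ c ∈ X, (∀ l ∈ c.nbody, l ∉ S) → (∀ l ∈ c.pbody, l ∈ T) → c.head ∈ T := by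
  simp [satAll_reduct_iff, CrRule.alpha, or_imp, forall_and]

def Lit.FreeOf (appl : Fin N → α) (l : Lit α) : Prop :=
  ∀ i, l.atom ≠ appl i

def Rule.FreeOf (appl : Fin N → α) (r : Rule α) : Prop :=
  (∀ l ∈ r.head, l.FreeOf appl) ∧ (∀ l ∈ r.pbody, l.FreeOf appl) ∧ ∀ l ∈ r.nbody, l.FreeOf appl

section Restrict

variable {appl : Fin N → α} {S T : Set (Lit α)}

theorem restrictAway_subset : restrictAway appl S ⊆ S :=
  fun _ hl => hl.1

theorem restrictAway_mono (h : S ⊆ T) : restrictAway appl S ⊆ restrictAway appl T :=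
  fun _ hl => ⟨h hl.1, hl.2⟩

theorem mem_restrictAway_of_freeOf {l : Lit α} (hl : l.FreeOf appl) :
    l ∈ restrictAway appl S ↔ l ∈ S :=
  ⟨And.left, fun h => ⟨h, hl⟩⟩

theorem satAll_reduct_restrictAway_iff {P : Set (Rule α)} (hP : ∀ r ∈ P, r.FreeOf appl) :
    SatAll (reduct P (restrictAway appl S)) (restrictAway appl T) ↔ SatAll (reduct P S) T := by
  simp only [satAll_reduct_iff]
  refine forall₂_congr fun r hr => ?_
  obtain ⟨hh, hp, hn⟩ := hP r hr
  exact imp_congr (forall₂_congr fun l hl => not_congr (mem_restrictAway_of_freeOf (hn l hl)))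
    (imp_congr (forall₂_congr fun l hl => mem_restrictAway_of_freeOf (hp l hl))
      (exists_congr fun l => and_congr_right fun hl => mem_restrictAway_of_freeOf (hh l hl)))

theorem CrRule.bodyHolds_restrictAway_iff {c : CrRule α} (hc : c.alpha.FreeOf appl) :
    c.BodyHolds (restrictAway appl S) ↔ c.BodyHolds S :=
  and_congr (forall₂_congr fun l hl => mem_restrictAway_of_freeOf (hc.2.1 l hl))
    (forall₂_congr fun l hl => not_congr (mem_restrictAway_of_freeOf (hc.2.2 l hl)))

theorem IsAnswerSet.freeOf {P : Set (Rule α)} (hP : ∀ r ∈ P, ∀ l ∈ r.head, l.FreeOf appl)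
    (hS : IsAnswerSet P S) : ∀ l ∈ S, l.FreeOf appl := by
  have hsat : SatAll (reduct P S) (restrictAway appl S) := by
    refine satAll_reduct_iff.2 fun r hr hn hp => ?_
    obtain ⟨l, hl, hlS⟩ := satAll_reduct_iff.1 hS.2.1 r hr hn fun l h => (hp l h).1
    exact ⟨l, hl, hlS, hP r hr l hl⟩
  have heq := hS.2.2 _ (hS.1.mono restrictAway_subset) hsat restrictAway_subset
  exact fun l hl => (heq.symm.subset hl).2

end Restrict

section Translation

variable {R : Finset (Rule α)} {cr : Fin N → CrRule α} {appl : Fin N → α}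

theorem satAll_reduct_tauHard_iff {S T : Set (Lit α)} :
    SatAll (reduct (tauHard R cr appl) S) T ↔ SatAll (reduct ↑R S) T ∧
      (∀ i, (∀ l ∈ (cr i).nbody, l ∉ S) → (∀ l ∈ (cr i).pbody, l ∈ T) →
        Lit.pos (appl i) ∈ T ∨ Lit.neg (appl i) ∈ T) ∧
      (∀ i, (∀ l ∈ (cr i).nbody, l ∉ S) → Lit.pos (appl i) ∈ T →
        (∀ l ∈ (cr i).pbody, l ∈ T) → (cr i).head ∈ T) := by
  simp [satAll_reduct_iff, tauHard, choiceRule, applRule, or_imp, forall_and, and_assoc]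

theorem Rule.freeOf_iff {r : Rule α} : r.FreeOf appl ↔ ∀ i, ¬ OccursInRule (appl i) r := by
  simp only [Rule.FreeOf, Lit.FreeOf, OccursInRule, List.append_assoc, List.mem_append,
    or_imp, forall_and, not_exists, not_and]
  grind

theorem FreshAppl.ruleFreeOf (hfresh : FreshAppl R cr appl) {r : Rule α} (hr : r ∈ R) :
    r.FreeOf appl :=
  Rule.freeOf_iff.2 fun i => (hfresh.2 i).1 r hr

theorem FreshAppl.alpha_freeOf (hfresh : FreshAppl R cr appl) (j : Fin N) :
    (cr j).alpha.FreeOf appl :=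
  Rule.freeOf_iff.2 fun i h => (hfresh.2 i).2 j (by
    simpa [OccursInRule, OccursInCrRule, CrRule.alpha] using h)

theorem FreshAppl.freeOf_of_isAnswerSet [DecidableEq α] (hfresh : FreshAppl R cr appl)
    {X : Finset (CrRule α)} (hX : X ⊆ Finset.image cr Finset.univ) {A : Set (Lit α)}
    (hA : IsAnswerSet (↑R ∪ ↑(X.image CrRule.alpha)) A) : ∀ l ∈ A, l.FreeOf appl := by
  refine hA.freeOf fun r hr => ?_
  rcases hr with hr | hr
  · exact (hfresh.ruleFreeOf hr).1
  · obtain ⟨c, hc, rfl⟩ := Finset.mem_image.1 hr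
    obtain ⟨j, -, rfl⟩ := Finset.mem_image.1 (hX hc)
    exact (hfresh.alpha_freeOf j).1

section Extension

variable [DecidableEq α] {X : Finset (CrRule α)} {A T : Set (Lit α)}

def applChoice (cr : Fin N → CrRule α) (appl : Fin N → α) (X : Finset (CrRule α)) (i : Fin N) :
    Lit α :=
  if cr i ∈ X then .pos (appl i) else .neg (appl i)

def applExtension (cr : Fin N → CrRule α) (appl : Fin N → α) (X : Finset (CrRule α))
    (A : Set (Lit α)) : Set (Lit α) :=
  A ∪ applChoice cr appl X '' {i | (cr i).BodyHolds A}

theorem applChoice_atom (i : Fin N) : (applChoice cr appl X i).atom = appl i := by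
  unfold applChoice; split <;> rfl

theorem mem_applExtension_of_freeOf {l : Lit α} (hl : l.FreeOf appl) :
    l ∈ applExtension cr appl X A ↔ l ∈ A := by
  refine ⟨?_, Or.inl⟩
  rintro (h | ⟨i, -, rfl⟩)
  · exact h
  · exact absurd (applChoice_atom i) (hl i)

theorem restrictAway_applExtension (hA : ∀ l ∈ A, l.FreeOf appl) :
    restrictAway appl (applExtension cr appl X A) = A := by
  ext l
  exact ⟨fun hl => (mem_applExtension_of_freeOf hl.2).1 hl.1, fun hl => ⟨Or.inl hl, hA l hl⟩⟩

theorem bodyHolds_applExtension_iff (hfresh : FreshAppl R cr appl)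
    (hA : ∀ l ∈ A, l.FreeOf appl) (i : Fin N) :
    (cr i).BodyHolds (applExtension cr appl X A) ↔ (cr i).BodyHolds A := by
  rw [← (cr i).bodyHolds_restrictAway_iff (hfresh.alpha_freeOf i), restrictAway_applExtension hA]

theorem pos_mem_applExtension_iff (happl : Function.Injective appl)
    (hA : ∀ l ∈ A, l.FreeOf appl) {i : Fin N} :
    .pos (appl i) ∈ applExtension cr appl X A ↔ (cr i).BodyHolds A ∧ cr i ∈ X := by
  refine ⟨?_, fun ⟨hb, hX⟩ => Or.inr ⟨i, hb, if_pos hX⟩⟩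
  rintro (h | ⟨j, hb, hj⟩)
  · exact absurd rfl (hA _ h i)
  · unfold applChoice at hj
    split_ifs at hj with hX
    · obtain rfl := happl (Lit.pos.inj hj)
      exact ⟨hb, hX⟩

theorem neg_mem_applExtension_iff (happl : Function.Injective appl)
    (hA : ∀ l ∈ A, l.FreeOf appl) {i : Fin N} :
    .neg (appl i) ∈ applExtension cr appl X A ↔ (cr i).BodyHolds A ∧ cr i ∉ X := by
  refine ⟨?_, fun ⟨hb, hX⟩ => Or.inr ⟨i, hb, if_neg hX⟩⟩
  rintro (h | ⟨j, hb, hj⟩)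
  · exact absurd rfl (hA _ h i)
  · unfold applChoice at hj
    split_ifs at hj with hX
    · obtain rfl := happl (Lit.neg.inj hj)
      exact ⟨hb, hX⟩

theorem consistent_applExtension (happl : Function.Injective appl)
    (hA : ∀ l ∈ A, l.FreeOf appl) (hAc : Consistent A) :
    Consistent (applExtension cr appl X A) := by
  rintro a ⟨hpos, hneg⟩
  by_cases ha : (Lit.pos a).FreeOf appl
  · exact hAc a ⟨(mem_applExtension_of_freeOf ha).1 hpos,
      (mem_applExtension_of_freeOf (l := .neg a) ha).1 hneg⟩
  · obtain ⟨i, rfl⟩ : ∃ i, a = appl i := by simpa [Lit.FreeOf, Lit.atom] using ha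
    exact ((neg_mem_applExtension_iff happl hA).1 hneg).2
      ((pos_mem_applExtension_iff happl hA).1 hpos).2

theorem applChoice_mem_of_subset (happl : Function.Injective appl)
    (hA : ∀ l ∈ A, l.FreeOf appl) (hTE : T ⊆ applExtension cr appl X A) {i : Fin N}
    (h : .pos (appl i) ∈ T ∨ .neg (appl i) ∈ T) : applChoice cr appl X i ∈ T := by
  rcases h with h | h
  · rwa [applChoice, if_pos ((pos_mem_applExtension_iff happl hA).1 (hTE h)).2]
  · rwa [applChoice, if_neg ((neg_mem_applExtension_iff happl hA).1 (hTE h)).2]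

theorem satAll_reduct_applExtension (hfresh : FreshAppl R cr appl)
    (hA : ∀ l ∈ A, l.FreeOf appl) (hsat : SatAll (reduct (↑R ∪ ↑(X.image CrRule.alpha)) A) A) :
    SatAll (reduct (tauHard R cr appl) (applExtension cr appl X A))
      (applExtension cr appl X A) := by
  have hEA : restrictAway appl (applExtension cr appl X A) = A := restrictAway_applExtension hA
  obtain ⟨hR, hX⟩ := satAll_reduct_union_alpha_iff.1 hsat
  refine satAll_reduct_tauHard_iff.2 ⟨?_, fun i hn hp => ?_, fun i _ hpos _ => ?_⟩
  · rwa [← satAll_reduct_restrictAway_iff (fun r hr => hfresh.ruleFreeOf hr), hEA]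
  · have hb := (bodyHolds_applExtension_iff hfresh hA i).1 ⟨hp, hn⟩
    by_cases hXi : cr i ∈ X
    · exact Or.inl ((pos_mem_applExtension_iff hfresh.1 hA).2 ⟨hb, hXi⟩)
    · exact Or.inr ((neg_mem_applExtension_iff hfresh.1 hA).2 ⟨hb, hXi⟩)
  · obtain ⟨hb, hXi⟩ := (pos_mem_applExtension_iff hfresh.1 hA).1 hpos
    exact Or.inl (hX _ hXi hb.2 hb.1)

theorem applExtension_subset_of_satAll (hfresh : FreshAppl R cr appl)
    (hX : X ⊆ Finset.image cr Finset.univ) (hAX : IsAnswerSet (↑R ∪ ↑(X.image CrRule.alpha)) A)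
    (hA : ∀ l ∈ A, l.FreeOf appl) (hT : Consistent T)
    (hsat : SatAll (reduct (tauHard R cr appl) (applExtension cr appl X A)) T)
    (hTE : T ⊆ applExtension cr appl X A) : applExtension cr appl X A ⊆ T := by
  have hEA : restrictAway appl (applExtension cr appl X A) = A := restrictAway_applExtension hA
  obtain ⟨hR, hchoice, happlR⟩ := satAll_reduct_tauHard_iff.1 hsat
  have hpick : ∀ i, (cr i).BodyHolds A → (∀ l ∈ (cr i).pbody, l ∈ T) →
      applChoice cr appl X i ∈ T := fun i hb hp =>
    applChoice_mem_of_subset hfresh.1 hA hTE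
      (hchoice i ((bodyHolds_applExtension_iff hfresh hA i).2 hb).2 hp)
  have hTA : restrictAway appl T = A := by
    refine hAX.2.2 _ (hT.mono restrictAway_subset) ?_ (hEA ▸ restrictAway_mono hTE)
    refine satAll_reduct_union_alpha_iff.2 ⟨?_, fun c hc hn hp => ?_⟩
    · rwa [← hEA, satAll_reduct_restrictAway_iff (fun r hr => hfresh.ruleFreeOf hr)]
    obtain ⟨j, -, rfl⟩ := Finset.mem_image.1 (hX hc)
    have hb : (cr j).BodyHolds A := ⟨fun l hl => hEA ▸ restrictAway_mono hTE (hp l hl), hn⟩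
    have hpT : ∀ l ∈ (cr j).pbody, l ∈ T := fun l hl => (hp l hl).1
    have hpos : .pos (appl j) ∈ T := by simpa [applChoice, hc] using hpick j hb hpT
    exact ⟨happlR j ((bodyHolds_applExtension_iff hfresh hA j).2 hb).2 hpos hpT,
      (hfresh.alpha_freeOf j).1 _ (List.mem_singleton_self _)⟩
  have hAT : A ⊆ T := hTA ▸ restrictAway_subset
  rintro l (hl | ⟨i, hb, rfl⟩)
  · exact hAT hl
  · exact hpick i hb fun l hl => hAT (hb.1 l hl)

theorem isAnswerSet_applExtension (hfresh : FreshAppl R cr appl)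
    (hX : X ⊆ Finset.image cr Finset.univ) (hAX : IsAnswerSet (↑R ∪ ↑(X.image CrRule.alpha)) A) :
    IsAnswerSet (tauHard R cr appl) (applExtension cr appl X A) := by
  have hA := hfresh.freeOf_of_isAnswerSet hX hAX
  exact ⟨consistent_applExtension hfresh.1 hA hAX.1, satAll_reduct_applExtension hfresh hA hAX.2.1,
    fun T hT hsat hTE => hTE.antisymm (applExtension_subset_of_satAll hfresh hX hAX hA hT hsat hTE)⟩

end Extension

theorem violatesWC_wcOf_iff {S : Set (Lit α)} {i : Fin N} :
    ViolatesWC S (wcOf cr appl i) ↔ .pos (appl i) ∈ S ∧ (cr i).BodyHolds S := by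
  simp [ViolatesWC, wcOf, CrRule.BodyHolds, and_assoc]

section Violations

variable [DecidableEq α] {S T : Set (Lit α)}

open scoped Classical in
noncomputable def violatedRules (cr : Fin N → CrRule α) (appl : Fin N → α) (S : Set (Lit α)) :
    Finset (CrRule α) :=
  (Finset.univ.filter fun i => ViolatesWC S (wcOf cr appl i)).image cr

theorem mem_violatedRules {c : CrRule α} :
    c ∈ violatedRules cr appl S ↔ ∃ i, ViolatesWC S (wcOf cr appl i) ∧ cr i = c := by
  simp [violatedRules]

theorem violatedRules_subset : violatedRules cr appl S ⊆ Finset.image cr Finset.univ :=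
  Finset.image_subset_image (Finset.subset_univ _)

theorem violatedCount_tauWeak (hcr : Function.Injective cr) (happl : Function.Injective appl) :
    violatedCount (tauWeak cr appl) S = (violatedRules cr appl S).card := by
  have hwc : Function.Injective (wcOf cr appl) := fun i j h =>
    happl (Lit.pos.inj (List.head_eq_of_cons_eq (congrArg WeakConstraint.pbody h)))
  have hW : {w | w ∈ tauWeak cr appl ∧ ViolatesWC S w} =
      wcOf cr appl '' {i | ViolatesWC S (wcOf cr appl i)} := by
    ext w
    constructor
    · rintro ⟨hw, hv⟩
      obtain ⟨i, -, rfl⟩ := Finset.mem_image.1 hw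
      exact ⟨i, hv, rfl⟩
    · rintro ⟨i, hv, rfl⟩
      exact ⟨Finset.mem_image_of_mem _ (Finset.mem_univ i), hv⟩
  have hV : (violatedRules cr appl S : Set (CrRule α)) =
      cr '' {i | ViolatesWC S (wcOf cr appl i)} := by
    ext c
    simp [mem_violatedRules]
  rw [violatedCount, hW, Set.ncard_image_of_injective _ hwc, ← Set.ncard_coe_finset, hV,
    Set.ncard_image_of_injective _ hcr]

theorem violatedRules_applExtension_subset {X : Finset (CrRule α)} {A : Set (Lit α)}
    (happl : Function.Injective appl) (hA : ∀ l ∈ A, l.FreeOf appl) :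
    violatedRules cr appl (applExtension cr appl X A) ⊆ X := by
  intro c hc
  obtain ⟨i, hv, rfl⟩ := mem_violatedRules.1 hc
  exact ((pos_mem_applExtension_iff happl hA).1 (violatesWC_wcOf_iff.1 hv).1).2

theorem satAll_reduct_restrictAway_of_tauHard (hfresh : FreshAppl R cr appl)
    (hsat : SatAll (reduct (tauHard R cr appl) T) T) :
    SatAll (reduct (↑R ∪ ↑((violatedRules cr appl T).image CrRule.alpha)) (restrictAway appl T))
      (restrictAway appl T) := by
  obtain ⟨hR, -, happlR⟩ := satAll_reduct_tauHard_iff.1 hsat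
  refine satAll_reduct_union_alpha_iff.2
    ⟨(satAll_reduct_restrictAway_iff fun r hr => hfresh.ruleFreeOf hr).2 hR, fun c hc _ _ => ?_⟩
  obtain ⟨i, hv, rfl⟩ := mem_violatedRules.1 hc
  obtain ⟨hpos, hp, hn⟩ := violatesWC_wcOf_iff.1 hv
  exact ⟨happlR i hn hpos hp, (hfresh.alpha_freeOf i).1 _ (List.mem_singleton_self _)⟩

theorem restrictAway_subset_of_satAll (hfresh : FreshAppl R cr appl)
    (hT : IsAnswerSet (tauHard R cr appl) T) {U : Set (Lit α)}
    (hsat : SatAll (reduct (↑R ∪ ↑((violatedRules cr appl T).image CrRule.alpha))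
      (restrictAway appl T)) U)
    (hUT : U ⊆ restrictAway appl T) : restrictAway appl T ⊆ U := by
  -- `U` together with the fresh literals of `T` satisfies the reduct of τ(Π) relative to `T`,
  -- so it is all of `T` by minimality.
  set U' := U ∪ (T \ restrictAway appl T)
  have hU'U : restrictAway appl U' = U := by
    ext l
    refine ⟨?_, fun hl => ⟨Or.inl hl, (hUT hl).2⟩⟩
    rintro ⟨hl | hl, hfree⟩
    · exact hl
    · exact absurd ⟨hl.1, hfree⟩ hl.2
  have hU'T : U' ⊆ T := Set.union_subset (hUT.trans restrictAway_subset) Set.sdiff_subset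
  obtain ⟨hR, hY⟩ := satAll_reduct_union_alpha_iff.1 hsat
  have hsat' : SatAll (reduct (tauHard R cr appl) T) U' := by
    refine satAll_reduct_tauHard_iff.2 ⟨?_, fun i hn hp => ?_, fun i hn hpos hp => ?_⟩
    · rwa [← satAll_reduct_restrictAway_iff (fun r hr => hfresh.ruleFreeOf hr), hU'U]
    · rcases (satAll_reduct_tauHard_iff.1 hT.2.1).2.1 i hn fun l hl => hU'T (hp l hl) with h | h
      · exact Or.inl (Or.inr ⟨h, fun h' => h'.2 i rfl⟩)
      · exact Or.inr (Or.inr ⟨h, fun h' => h'.2 i rfl⟩)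
    · have hpU : ∀ l ∈ (cr i).pbody, l ∈ U := fun l hl =>
        hU'U ▸ ⟨hp l hl, (hfresh.alpha_freeOf i).2.1 l hl⟩
      have hv : ViolatesWC T (wcOf cr appl i) := violatesWC_wcOf_iff.2
        ⟨hU'T hpos, fun l hl => restrictAway_subset (hUT (hpU l hl)), hn⟩
      exact Or.inl (hY _ (mem_violatedRules.2 ⟨i, hv, rfl⟩) (fun l hl h => hn l hl h.1) hpU)
  rw [← hU'U, hT.2.2 U' (hT.1.mono hU'T) hsat' hU'T]

theorem isAnswerSet_restrictAway_of_tauHard (hfresh : FreshAppl R cr appl)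
    (hT : IsAnswerSet (tauHard R cr appl) T) :
    IsAnswerSet (↑R ∪ ↑((violatedRules cr appl T).image CrRule.alpha)) (restrictAway appl T) :=
  ⟨hT.1.mono restrictAway_subset, satAll_reduct_restrictAway_of_tauHard hfresh hT.2.1,
    fun _ _ hsat hUT => hUT.antisymm (restrictAway_subset_of_satAll hfresh hT hsat hUT)⟩

end Violations

end Translation

end CrTranslation

theorem crAnswerSet_exists_translation_answerSet_general
    {α : Type} [DecidableEq α] {N : ℕ}
    (R : Finset (Rule α)) (cr : Fin N → CrRule α) (hcr : Function.Injective cr)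
    (appl : Fin N → α) (hfresh : FreshAppl R cr appl)
    (A : Set (Lit α)) (hA : IsCrAnswerSet R (Finset.image cr Finset.univ) A) :
    ∃ S, IsWcAnswerSet (tauHard R cr appl) (tauWeak cr appl) S ∧
      A = restrictAway appl S := by
  obtain ⟨X, ⟨hX, -, hXmin⟩, hAX⟩ := hA
  have hAfree := hfresh.freeOf_of_isAnswerSet hX hAX
  refine ⟨applExtension cr appl X A, ⟨isAnswerSet_applExtension hfresh hX hAX, fun T hT => ?_⟩,
    (restrictAway_applExtension hAfree).symm⟩
  calc violatedCount (tauWeak cr appl) (applExtension cr appl X A)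
      _ = (violatedRules cr appl (applExtension cr appl X A)).card :=
        violatedCount_tauWeak hcr hfresh.1
      _ ≤ X.card := Finset.card_le_card (violatedRules_applExtension_subset hfresh.1 hAfree)
      _ ≤ (violatedRules cr appl T).card :=
        hXmin _ violatedRules_subset ⟨_, isAnswerSet_restrictAway_of_tauHard hfresh hT⟩
      _ = violatedCount (tauWeak cr appl) T := (violatedCount_tauWeak hcr hfresh.1).symm

/-- If `A` is an answer set of the finite ground CR-program
Π = (R, CR), then there is an answer set `S` of the weak-constraint translation τ(Π)
such that `A` is exactly the set of literals of `S` not formed from any of the fresh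
atoms `appl 1, …, appl N`. -/
theorem crAnswerSet_exists_translation_answerSet
    {α : Type} [DecidableEq α] [Countable α] {N : ℕ}
    (R : Finset (Rule α)) (cr : Fin N → CrRule α) (hcr : Function.Injective cr)
    (appl : Fin N → α) (hfresh : FreshAppl R cr appl)
    (A : Set (Lit α)) (hA : IsCrAnswerSet R (Finset.image cr Finset.univ) A) :
    ∃ S, IsWcAnswerSet (tauHard R cr appl) (tauWeak cr appl) S ∧
      A = restrictAway appl S :=
  crAnswerSet_exists_translation_answerSet_general R cr hcr appl hfresh A hA
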